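/- Fix a real wave number k ≠ 0. With A(k²,ε) and B(k²,ε) defined from the non-real roots λ₁(ε), λ₂(ε) of P_k as A = −4ε(1 + ε(λ₁+λ₂))/(3 + 3ε(λ₁+λ₂) + ε²(3λ₁λ₂ − 4k²)) and B = −4ε²/(3 + 3ε(λ₁+λ₂) + ε²(3λ₁λ₂ − 4k²)), the slow-hydrodynamics generator M(ε) = [[0, −(5/3)ik], [−ik(1 − k²B), k²A]] agrees with the Navier–Stokes generator M_NS(ε) = [[0, −(5/3)ik], [−ik, −(4/3)εk²]] to first order in ε: lim_{ε→0⁺} (k²A(k²,ε) + (4/3)εk²)/ε = 0 and lim_{ε→0⁺} k³B(k²,ε)/ε = 0. -/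

import Mathlib

/-- The characteristic polynomial `P_k(λ)` of the Grad generator. -/
noncomputable def gradP (ε k : ℝ) (l : ℂ) : ℂ :=
  -l^3 - (1/ε) * l^2 - 3 * k^2 * l - (5/3) * k^2 / ε

/-- The slow-manifold closure coefficient `A(k²,ε)` built from the two acoustic roots. -/
noncomputable def gradA (ε k : ℝ) (l₁ l₂ : ℂ) : ℂ :=
  -4 * ε * (1 + ε * (l₁ + l₂)) /
    (3 + 3 * ε * (l₁ + l₂) + ε^2 * (3 * l₁ * l₂ - 4 * k^2))

/-- The slow-manifold closure coefficient `B(k²,ε)` built from the two acoustic roots. -/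
noncomputable def gradB (ε k : ℝ) (l₁ l₂ : ℂ) : ℂ :=
  -4 * ε^2 /
    (3 + 3 * ε * (l₁ + l₂) + ε^2 * (3 * l₁ * l₂ - 4 * k^2))

lemma toQ (k ε : ℝ) (hε : 0 < ε) (l : ℂ) (h1 : gradP ε k l = 0) :
    (ε:ℂ)*l^3 + l^2 + 3*ε*k^2*l + 5/3*k^2 = 0 := by
  have hεc : (ε:ℂ) ≠ 0 := by exact_mod_cast hε.ne'
  unfold gradP at h1
  field_simp at h1
  apply mul_left_cancel₀ (show (3*(ε:ℂ)) ≠ 0 by simp [hεc])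
  rw [mul_zero]
  linear_combination -(ε:ℂ) * h1

lemma realBounds (k ε sr pr : ℝ) (hk2 : 0 < k^2) (hε : 0 < ε) (hεk : ε * |k| ≤ 1/5)
    (hpr : 0 < pr)
    (R1 : ε*(sr^2 - pr) + sr + 3*ε*k^2 = 0)
    (R2 : ε*pr*sr + pr - 5/3*k^2 = 0) :
    5/9 ≤ 1 + ε*sr ∧ -(27/5*ε^2*k^2) ≤ ε*sr ∧ ε*sr ≤ 0 ∧ pr ≤ 3*k^2 ∧
      2 ≤ 3 + 3*ε*sr + ε^2*(3*pr - 4*k^2) := by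
  set u : ℝ := ε*sr with hu
  have RT : u*((1+u)^2 + 3*ε^2*k^2) + 4/3*ε^2*k^2 = 0 := by
    linear_combination (ε*(1+ε*sr))*R1 + ε^2*R2
  have hQpos : 0 < (1+u)^2 + 3*ε^2*k^2 := by positivity
  have huneg : u ≤ 0 := by nlinarith
  have hu49 : -(4/9) ≤ u := by nlinarith
  have h1u : 5/9 ≤ 1 + u := by linarith
  have hubd : -(27/5*ε^2*k^2) ≤ u := by nlinarith
  have hprbd : pr ≤ 3*k^2 := by nlinarith
  have hε2k2 : ε^2*k^2 ≤ 1/25 := by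
    have : (ε*|k|)^2 ≤ (1/5)^2 := by
      apply sq_le_sq' <;> nlinarith [abs_nonneg k, mul_nonneg hε.le (abs_nonneg k)]
    calc ε^2*k^2 = (ε*|k|)^2 := by rw [mul_pow, sq_abs]
    _ ≤ 1/25 := by nlinarith
  refine ⟨h1u, hubd, huneg, hprbd, ?_⟩
  nlinarith

lemma master (k ε : ℝ) (hk : k ≠ 0) (hε : 0 < ε) (hεk : ε * |k| ≤ 1/5) (l₁ l₂ : ℂ)
    (h1 : gradP ε k l₁ = 0) (h2 : gradP ε k l₂ = 0)
    (him : l₁.im ≠ 0) (hc : l₂ = starRingEnd ℂ l₁) :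
    ‖((k:ℂ)^2 * gradA ε k l₁ l₂ + (4/3) * ε * k^2) / (ε:ℂ)‖ ≤ 4*k^4*ε^2 ∧
    ‖(k:ℂ)^3 * gradB ε k l₁ l₂ / (ε:ℂ)‖ ≤ 2*|k|^3*ε := by
  have hk2 : 0 < k^2 := by positivity
  have hεc : (ε:ℂ) ≠ 0 := by exact_mod_cast hε.ne'
  have hQ1 := toQ k ε hε l₁ h1
  have hQ2 := toQ k ε hε l₂ h2
  have hd : l₁ - l₂ ≠ 0 := by
    rw [hc, sub_ne_zero]
    intro h
    exact him (Complex.conj_eq_iff_im.mp h.symm)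
  set sr : ℝ := 2*l₁.re with hsr
  set pr : ℝ := Complex.normSq l₁ with hpr
  have hs : l₁ + l₂ = (sr:ℂ) := by rw [hc, Complex.add_conj, hsr]
  have hp : l₁ * l₂ = (pr:ℂ) := by rw [hc, Complex.mul_conj]
  have hprpos : 0 < pr := by
    rw [hpr]
    exact Complex.normSq_pos.mpr (fun h => him (by simp [h]))
  clear_value sr pr
  clear hsr hpr
  -- complex identities
  have hfac1 : (l₁ - l₂) * ((ε:ℂ)*((l₁+l₂)^2 - l₁*l₂) + (l₁+l₂) + 3*ε*k^2) = 0 := by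
    linear_combination hQ1 - hQ2
  have E1 := (mul_eq_zero.mp hfac1).resolve_left hd
  rw [hs, hp] at E1
  have hfac2 : (l₁ - l₂) * ((ε:ℂ)*(l₁*l₂)*(l₁+l₂) + l₁*l₂ - 5/3*k^2) = 0 := by
    linear_combination l₂ * hQ1 - l₁ * hQ2
  have E2 := (mul_eq_zero.mp hfac2).resolve_left hd
  rw [hs, hp] at E2
  -- real identities
  have R1 : ε*(sr^2 - pr) + sr + 3*ε*k^2 = 0 := by
    have h : ((ε*(sr^2 - pr) + sr + 3*ε*k^2 : ℝ):ℂ) = 0 := by push_cast; linear_combination E1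
    exact_mod_cast h
  have R2 : ε*pr*sr + pr - 5/3*k^2 = 0 := by
    have h : ((ε*pr*sr + pr - 5/3*k^2 : ℝ):ℂ) = 0 := by push_cast; linear_combination E2
    exact_mod_cast h
  -- real bounds
  obtain ⟨h1u, hubd, huneg, hprbd, hDr2'⟩ := realBounds k ε sr pr hk2 hε hεk hprpos R1 R2
  set Dr : ℝ := 3 + 3*ε*sr + ε^2*(3*pr - 4*k^2) with hDr
  have hDr2 : 2 ≤ Dr := hDr2'
  have hDrpos : (0:ℝ) < Dr := by linarith
  -- complex denominator
  have hDc : (3 + 3*(ε:ℂ)*(l₁+l₂) + (ε:ℂ)^2*(3*l₁*l₂ - 4*(k:ℂ)^2)) = ((Dr:ℝ):ℂ) := by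
    rw [hDr]
    push_cast
    linear_combination 3*(ε:ℂ)*hs + 3*(ε:ℂ)^2*hp
  have hDcne : ((Dr:ℝ):ℂ) ≠ 0 := by exact_mod_cast hDrpos.ne'
  clear_value Dr
  constructor
  · have heq1 : ((k:ℂ)^2 * gradA ε k l₁ l₂ + (4/3) * ε * k^2) / (ε:ℂ)
        = ((4/3*ε^2*k^2*(3*pr-4*k^2)/Dr : ℝ):ℂ) := by
      have hDrC : ((Dr:ℝ):ℂ) = 3 + 3*(ε:ℂ)*(sr:ℂ) + (ε:ℂ)^2*(3*(pr:ℂ) - 4*(k:ℂ)^2) := by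
        rw [hDr]; push_cast; ring
      unfold gradA
      rw [hDc, hs]
      push_cast
      field_simp
      linear_combination (k:ℂ)^2 * hDrC
    rw [heq1, Complex.norm_real, Real.norm_eq_abs, abs_div, abs_of_pos hDrpos,
      div_le_iff₀ hDrpos]
    have key1 := mul_le_mul_of_nonneg_left hDr2 (show (0:ℝ) ≤ 4*k^4*ε^2 by positivity)
    have key2 := mul_le_mul_of_nonneg_left hprbd (show (0:ℝ) ≤ 4*ε^2*k^2 by positivity)
    have key3 : 0 ≤ ε^2*k^2*pr := by positivity
    rw [abs_le]
    constructor <;> nlinarith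
  · have heq2 : (k:ℂ)^3 * gradB ε k l₁ l₂ / (ε:ℂ)
        = ((-4*ε*k^3/Dr : ℝ):ℂ) := by
      unfold gradB
      rw [hDc]
      push_cast
      field_simp
    rw [heq2, Complex.norm_real, Real.norm_eq_abs, abs_div, abs_of_pos hDrpos,
      div_le_iff₀ hDrpos]
    have h3 : |(-4)*ε*k^3| = 4*ε*|k|^3 := by
      rw [abs_mul, abs_mul, abs_pow, abs_of_pos hε]
      norm_num
    rw [h3]
    have key1 := mul_le_mul_of_nonneg_left hDr2 (show (0:ℝ) ≤ 2*|k|^3*ε by positivity)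
    nlinarith [mul_pos hε (pow_pos (abs_pos.mpr hk) 3)]

theorem grad_slow_generator_matches_navier_stokes_first_order
    (k : ℝ) (hk : k ≠ 0) (l₁ l₂ : ℝ → ℂ)
    (hroot₁ : ∀ ε : ℝ, 0 < ε → gradP ε k (l₁ ε) = 0)
    (hroot₂ : ∀ ε : ℝ, 0 < ε → gradP ε k (l₂ ε) = 0)
    (hnonreal : ∀ ε : ℝ, 0 < ε → (l₁ ε).im ≠ 0)
    (hconj : ∀ ε : ℝ, 0 < ε → l₂ ε = starRingEnd ℂ (l₁ ε)) :
    Filter.Tendsto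
      (fun ε : ℝ => ((k : ℂ)^2 * gradA ε k (l₁ ε) (l₂ ε) + (4/3) * ε * k^2) / (ε : ℂ))
      (nhdsWithin 0 (Set.Ioi 0)) (nhds (0 : ℂ)) ∧
    Filter.Tendsto
      (fun ε : ℝ => (k : ℂ)^3 * gradB ε k (l₁ ε) (l₂ ε) / (ε : ℂ))
      (nhdsWithin 0 (Set.Ioi 0)) (nhds (0 : ℂ)) := by
  have hkabs : 0 < |k| := abs_pos.mpr hk
  have hmem : Set.Ioo (0:ℝ) (1/(5*|k|)) ∈ nhdsWithin (0:ℝ) (Set.Ioi 0) := by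
    apply Ioo_mem_nhdsGT_of_mem
    exact ⟨le_refl 0, by positivity⟩
  have hbd : ∀ ε ∈ Set.Ioo (0:ℝ) (1/(5*|k|)), ε * |k| ≤ 1/5 := by
    intro ε hε
    have h5 : 0 < 5*|k| := by positivity
    have h2 := hε.2
    rw [lt_div_iff₀ h5] at h2
    nlinarith
  constructor
  · apply squeeze_zero_norm' (a := fun ε : ℝ => 4*k^4*ε^2)
    · filter_upwards [hmem] with ε hε
      exact (master k ε hk hε.1 (hbd ε hε) (l₁ ε) (l₂ ε) (hroot₁ ε hε.1) (hroot₂ ε hε.1)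
        (hnonreal ε hε.1) (hconj ε hε.1)).1
    · have hc : Continuous fun ε:ℝ => 4*k^4*ε^2 := by continuity
      exact (hc.tendsto' 0 0 (by norm_num)).mono_left nhdsWithin_le_nhds
  · apply squeeze_zero_norm' (a := fun ε : ℝ => 2*|k|^3*ε)
    · filter_upwards [hmem] with ε hε
      exact (master k ε hk hε.1 (hbd ε hε) (l₁ ε) (l₂ ε) (hroot₁ ε hε.1) (hroot₂ ε hε.1)
        (hnonreal ε hε.1) (hconj ε hε.1)).2
    · have hc : Continuous fun ε:ℝ => 2*|k|^3*ε := by continuity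
      exact (hc.tendsto' 0 0 (by norm_num)).mono_left nhdsWithin_le_nhds
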